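/- A simplicial set X has the right lifting property (with respect to the unique map X → Δ[0]) against every map in the class ({0} ↪ J) □ Bdry if and only if it has the right lifting property against every widened inclusion. -/

import Mathlib

open CategoryTheory Simplicial Opposite Limits

namespace Paper

/-! ## The simplicial set `J`, nerve of the free-living isomorphism -/

/-- The simplicial set `J`, the nerve of the free-living isomorphism `𝕀`:
its `n`-simplices are the tuples `{0,1}^(n+1)` (recorded as `Bool`-valued functions,
`false` being the vertex `0` and `true` the vertex `1`), with all simplicial
operators acting by reindexing. -/
def J : SSet.{0} where
  obj m := Fin (m.unop.len + 1) → Bool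
  map f := TypeCat.ofHom fun a => a ∘ f.unop.toOrderHom
  map_id _ := rfl
  map_comp _ _ := rfl

/-- The two vertices `0, 1 : Δ[0] ⟶ J` of `J`; `ptJ false` is the vertex `0` and
`ptJ true` is the vertex `1`. -/
def ptJ (b : Bool) : Δ[0] ⟶ J where
  app _ := TypeCat.ofHom fun _ => fun _ => b
  naturality _ _ _ := rfl

/-- The boundary `∂J = {0} ∪ {1}` of `J` (two discrete points). -/
def bJ : SSet.{0} where
  obj _ := Bool
  map _ := TypeCat.ofHom fun b => b
  map_id _ := rfl
  map_comp _ _ := rfl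

/-- The inclusion `∂J ↪ J`. -/
def bJIncl : bJ ⟶ J where
  app _ := TypeCat.ofHom fun b => fun _ => b
  naturality _ _ _ := rfl

/-! ## Binary products and pushout-products -/

/-- The (pointwise) product of two simplicial sets. -/
def sprod (X Y : SSet.{0}) : SSet.{0} where
  obj m := X.obj m × Y.obj m
  map f := TypeCat.ofHom fun p => (X.map f p.1, Y.map f p.2)
  map_id m := by
    ext p
    exacts [FunctorToTypes.map_id_apply X p.1, FunctorToTypes.map_id_apply Y p.2]
  map_comp f g := by
    ext p
    exacts [FunctorToTypes.map_comp_apply X f g p.1, FunctorToTypes.map_comp_apply Y f g p.2]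

/-- The product of two morphisms of simplicial sets. -/
def sprodMap {X X' Y Y' : SSet.{0}} (f : X ⟶ X') (g : Y ⟶ Y') : sprod X Y ⟶ sprod X' Y' where
  app m := TypeCat.ofHom fun p => (f.app m p.1, g.app m p.2)
  naturality m m' φ := by
    ext p
    refine Prod.ext ?_ ?_
    exacts [NatTrans.naturality_apply f φ p.1, NatTrans.naturality_apply g φ p.2]

/-- The pushout-product `f □ g : (A × Z) ∪ (B × W) ⟶ B × Z` of `f : A ⟶ B` and
`g : W ⟶ Z`, the domain being presented as the pushout `(A × Z) ∪_{A × W} (B × W)`. -/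
noncomputable def pp {A B W Z : SSet.{0}} (f : A ⟶ B) (g : W ⟶ Z) :
    pushout (sprodMap (𝟙 A) g) (sprodMap f (𝟙 W)) ⟶ sprod B Z :=
  pushout.desc (sprodMap f (𝟙 Z)) (sprodMap (𝟙 B) g) rfl

/-! ## Saturated classes of morphisms -/

/-- A class of morphisms is stable under retracts if, whenever `f` is a retract of `g`
in the arrow category, membership of `g` implies membership of `f`. -/
def StableUnderRetracts (T : MorphismProperty SSet.{0}) : Prop :=
  ∀ ⦃X Y X' Y' : SSet.{0}⦄ (f : X ⟶ Y) (g : X' ⟶ Y')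
    (i : Arrow.mk f ⟶ Arrow.mk g) (r : Arrow.mk g ⟶ Arrow.mk f),
    i ≫ r = 𝟙 _ → T g → T f

/-- The inclusion functor `Set.Iio i ⥤ ι`. -/
def iioFunctor {ι : Type} [Preorder ι] (i : ι) : Set.Iio i ⥤ ι :=
  Monotone.functor (f := Subtype.val) (fun _ _ h => h)

/-- The cocone on the restriction of `F : ι ⥤ SSet` to `Set.Iio i` with apex `F.obj i`. -/
def restrictionCocone {ι : Type} [Preorder ι] (F : ι ⥤ SSet.{0}) (i : ι) :
    Cocone (iioFunctor i ⋙ F) where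
  pt := F.obj i
  ι :=
    { app := fun j => F.map (homOfLE j.2.le)
      naturality := fun j k h => by
        dsimp [iioFunctor]
        rw [← F.map_comp, Category.comp_id]
        congr 1 }

/-- A class of morphisms is stable under transfinite composition if, for every
well-ordered type `ι` and every functor `F : ι ⥤ SSet` which is continuous at limit
stages and whose successor maps `F.obj i ⟶ F.obj (i+1)` all belong to the class, and
every colimit cocone `c` on `F`, the transfinite composite `F.obj ⊥ ⟶ c.pt` belongs to
the class. -/
def StableUnderTransfiniteComposition (T : MorphismProperty SSet.{0}) : Prop :=
  ∀ (ι : Type) [LinearOrder ι] [SuccOrder ι] [OrderBot ι] [WellFoundedLT ι]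
    (F : ι ⥤ SSet.{0}),
    (∀ i : ι, ¬IsMax i → T (F.map (homOfLE (Order.le_succ i)))) →
    (∀ i : ι, Order.IsSuccLimit i → Nonempty (IsColimit (restrictionCocone F i))) →
    ∀ (c : Cocone F), IsColimit c → T (c.ι.app ⊥)

/-- A class of morphisms of simplicial sets is saturated if it is closed under
isomorphisms, pushouts, transfinite compositions, and retracts. -/
structure IsSaturated (T : MorphismProperty SSet.{0}) : Prop where
  respectsIso : T.RespectsIso
  stableUnderCobaseChange : T.IsStableUnderCobaseChange
  stableUnderRetracts : StableUnderRetracts T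
  stableUnderTransfiniteComposition : StableUnderTransfiniteComposition T

/-- The saturated closure of a class of morphisms: the smallest saturated class
containing it. -/
def satClosure (S : MorphismProperty SSet.{0}) : MorphismProperty SSet.{0} :=
  fun _ _ f => ∀ T : MorphismProperty SSet.{0}, IsSaturated T → S ≤ T → T f

/-! ## Subcomplexes -/

/-- A subcomplex of a simplicial set. -/
structure Sub (X : SSet.{0}) where
  carrier : ∀ m, Set (X.obj m)
  map_mem : ∀ ⦃m m' : SimplexCategoryᵒᵖ⦄ (f : m ⟶ m') ⦃σ : X.obj m⦄,
    σ ∈ carrier m → X.map f σ ∈ carrier m'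

/-- The simplicial set underlying a subcomplex. -/
def Sub.toSSet {X : SSet.{0}} (S : Sub X) : SSet.{0} where
  obj m := S.carrier m
  map f := TypeCat.ofHom fun σ => ⟨X.map f σ.1, S.map_mem f σ.2⟩
  map_id m := by
    ext σ
    exact FunctorToTypes.map_id_apply X σ.1
  map_comp f g := by
    ext σ
    exact FunctorToTypes.map_comp_apply X f g σ.1

/-- The inclusion of a subcomplex. -/
def Sub.ι {X : SSet.{0}} (S : Sub X) : S.toSSet ⟶ X where
  app m := TypeCat.ofHom fun (σ : S.carrier m) => σ.1
  naturality _ _ _ := rfl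

/-- Containment of subcomplexes. -/
def Sub.Le {X : SSet.{0}} (S T : Sub X) : Prop := ∀ m, S.carrier m ⊆ T.carrier m

/-- The inclusion map associated to a containment of subcomplexes. -/
def Sub.homOfLe {X : SSet.{0}} {S T : Sub X} (h : S.Le T) : S.toSSet ⟶ T.toSSet where
  app m := TypeCat.ofHom fun (σ : S.carrier m) => (⟨σ.1, h m σ.2⟩ : T.carrier m)
  naturality _ _ _ := rfl

/-- The union of two subcomplexes. -/
def Sub.union {X : SSet.{0}} (S T : Sub X) : Sub X where
  carrier m := S.carrier m ∪ T.carrier m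
  map_mem _ _ f _ h := h.imp (fun hs => S.map_mem f hs) (fun ht => T.map_mem f ht)

/-- The intersection of two subcomplexes. -/
def Sub.inter {X : SSet.{0}} (S T : Sub X) : Sub X where
  carrier m := S.carrier m ∩ T.carrier m
  map_mem _ _ f _ h := ⟨S.map_mem f h.1, T.map_mem f h.2⟩

/-- A subcomplex `S` of `X`, viewed as a subcomplex of (the simplicial set underlying)
another subcomplex `T` of `X`. -/
def Sub.restrict {X : SSet.{0}} (T S : Sub X) : Sub T.toSSet where
  carrier m := {σ | Subtype.val σ ∈ S.carrier m}
  map_mem _ _ f _ h := S.map_mem f h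

/-- The (dimension zero) object of `SimplexCategoryᵒᵖ` indexing vertices. -/
abbrev V0 : SimplexCategoryᵒᵖ := Opposite.op (SimplexCategory.mk 0)

/-- The full subcomplex of `X` on a set `ν` of vertices: the simplices all of whose
vertices lie in `ν`. -/
def fullSub (X : SSet.{0}) (ν : Set (X.obj V0)) : Sub X where
  carrier m := {σ | ∀ g : SimplexCategory.mk 0 ⟶ m.unop, X.map g.op σ ∈ ν}
  map_mem := by
    intro m m' f σ hσ g
    rw [← FunctorToTypes.map_comp_apply]
    exact hσ (g ≫ f.unop)

/-! ## Widenings and widened inclusions -/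

/-- The widening `W_ν(X)` of `X` at a set `ν` of vertices: the full subcomplex of
`J × X` on the vertex set `({0} × X₀) ∪ ({1} × ν)`. -/
def wideSub (X : SSet.{0}) (ν : Set (X.obj V0)) : Sub (sprod J X) :=
  fullSub (sprod J X) {p | Prod.fst p 0 = true → Prod.snd p ∈ ν}

/-- The subcomplex `{0} × X` of `J × X` (the full subcomplex on the vertices
`{0} × X₀`). -/
def zeroSlice (X : SSet.{0}) : Sub (sprod J X) :=
  fullSub (sprod J X) {p | Prod.fst p 0 = false}

/-- For `A` a subcomplex of `Y`, the subcomplex `J × A` of `J × Y`. -/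
def Sub.prodJ {Y : SSet.{0}} (A : Sub Y) : Sub (sprod J Y) where
  carrier m := {p | Prod.snd p ∈ A.carrier m}
  map_mem _ _ f _ h := A.map_mem f h

/-- Given a subcomplex (inclusion) `A = X ⊆ Y` and a set `ν` of vertices of `Y`, the
subcomplex `({0} × Y) ∪ W_{ν ∩ X₀}(X)` of `J × Y`: the domain of the inclusion
`X ↪ Y` widened at `ν`. -/
def widenedSub (Y : SSet.{0}) (A : Sub Y) (ν : Set (Y.obj V0)) : Sub (sprod J Y) :=
  (zeroSlice Y).union ((wideSub Y (ν ∩ A.carrier V0)).inter A.prodJ)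

lemma zeroSlice_le_wideSub (Y : SSet.{0}) (ν : Set (Y.obj V0)) :
    (zeroSlice Y).Le (wideSub Y ν) := by
  intro m σ hσ g h
  exact absurd (hσ g) (by simp [h])

lemma wideSub_mono (Y : SSet.{0}) {ν ν' : Set (Y.obj V0)} (h : ν ⊆ ν') :
    (wideSub Y ν).Le (wideSub Y ν') :=
  fun _ σ hσ g ht => h (hσ g ht)

lemma widenedSub_le (Y : SSet.{0}) (A : Sub Y) (ν : Set (Y.obj V0)) :
    (widenedSub Y A ν).Le (wideSub Y ν) := by
  refine fun m σ hσ => Or.elim hσ (fun h => ?_) (fun h => ?_)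
  · exact zeroSlice_le_wideSub Y ν m h
  · exact wideSub_mono Y Set.inter_subset_left m h.1

/-- The inclusion `X ↪ Y` widened at `ν`: the inclusion
`({0} × Y) ∪ W_{ν ∩ X₀}(X) ↪ W_ν(Y)`. -/
def widenedIncl (Y : SSet.{0}) (A : Sub Y) (ν : Set (Y.obj V0)) :
    (widenedSub Y A ν).toSSet ⟶ (wideSub Y ν).toSSet :=
  Sub.homOfLe (widenedSub_le Y A ν)

/-- `Wide`: the class of all widened inclusions. -/
def Wide : MorphismProperty SSet.{0} := fun _ _ h =>
  ∃ (Y : SSet.{0}) (A : Sub Y) (ν : Set (Y.obj V0)),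
    Arrow.mk h = Arrow.mk (widenedIncl Y A ν)

/-- `Wide^(1)`: the class of inclusions widened at a single vertex. -/
def Wide1 : MorphismProperty SSet.{0} := fun _ _ h =>
  ∃ (Y : SSet.{0}) (A : Sub Y) (v : Y.obj V0),
    Arrow.mk h = Arrow.mk (widenedIncl Y A {v})

/-! ## Narrow vertices -/

/-- A vertex `v` of `Y` is narrow if every simplex of `Y` has at most one vertex equal
to `v`. -/
def Narrow (Y : SSet.{0}) (v : Y.obj V0) : Prop :=
  ∀ ⦃m : SimplexCategoryᵒᵖ⦄ (σ : Y.obj m) (g g' : SimplexCategory.mk 0 ⟶ m.unop),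
    Y.map g.op σ = v → Y.map g'.op σ = v → g = g'

/-- `Wide_nar`: the class of inclusions widened at a narrow set of vertices. -/
def WideNar : MorphismProperty SSet.{0} := fun _ _ h =>
  ∃ (Y : SSet.{0}) (A : Sub Y) (ν : Set (Y.obj V0)),
    (∀ v ∈ ν, Narrow Y v) ∧ Arrow.mk h = Arrow.mk (widenedIncl Y A ν)

/-- `Wide_nar^(1)`: the class of inclusions widened at a single narrow vertex. -/
def WideNar1 : MorphismProperty SSet.{0} := fun _ _ h =>
  ∃ (Y : SSet.{0}) (A : Sub Y) (v : Y.obj V0),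
    Narrow Y v ∧ Arrow.mk h = Arrow.mk (widenedIncl Y A {v})

/-! ## Standard simplices, boundaries, skeleta, iso-horns -/

/-- The unique map to the terminal simplicial set `Δ[0]`. -/
def toPt (X : SSet.{0}) : X ⟶ Δ[0] where
  app m := TypeCat.ofHom fun _ => SSet.stdSimplex.const 0 0 m
  naturality m m' f := by
    ext x
    apply SSet.stdSimplex.objEquiv.injective
    apply SimplexCategory.Hom.ext
    apply OrderHom.ext
    funext j
    exact Subsingleton.elim (α := Fin 1) _ _

/-- The `i`-th vertex of the standard simplex `Δ[n]`. -/
def vrt (n : ℕ) (i : Fin (n + 1)) : Δ[n].obj V0 :=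
  SSet.stdSimplex.const n i V0

/-- The boundary `∂Δ[n]`, as a subcomplex of `Δ[n]`: the simplices which are not
surjective as monotone maps. -/
def bSub (n : ℕ) : Sub Δ[n] where
  carrier m := {σ | ¬Function.Surjective (SSet.stdSimplex.asOrderHom σ)}
  map_mem _ _ f σ hσ h := hσ (Function.Surjective.of_comp h)

/-- The `k`-skeleton of `Y`, as a subcomplex: the simplices which factor through some
simplex of dimension at most `k`. -/
def skSub (Y : SSet.{0}) (k : ℕ) : Sub Y where
  carrier m := {σ | ∃ (j : ℕ) (_ : j ≤ k) (f : m.unop ⟶ SimplexCategory.mk j)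
    (τ : Y.obj (Opposite.op (SimplexCategory.mk j))), Y.map f.op τ = σ}
  map_mem := by
    rintro m m' φ σ ⟨j, hj, f, τ, rfl⟩
    exact ⟨j, hj, φ.unop ≫ f, τ, by rw [← FunctorToTypes.map_comp_apply]; rfl⟩

/-- A `k`-simplex is nondegenerate if it admits no factorization through a simplex of
strictly smaller dimension. -/
def Nondegenerate (Y : SSet.{0}) {k : ℕ} (σ : Y.obj (Opposite.op (SimplexCategory.mk k))) :
    Prop :=
  ∀ (j : ℕ) (f : SimplexCategory.mk k ⟶ SimplexCategory.mk j)
    (τ : Y.obj (Opposite.op (SimplexCategory.mk j))), Y.map f.op τ = σ → k ≤ j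

/-- The iso-horn inclusion `𝕍_i[m+1] ↪ ∇̄_i[m+1]`: the boundary inclusion
`∂Δ[m] ↪ Δ[m]` widened at the single vertex `i`, i.e. the inclusion
`({0} × Δ[m]) ∪ W_i(∂Δ[m]) ↪ W_i(Δ[m])` of the iso-horn into the isoplex. -/
def isoHornIncl (m : ℕ) (i : Fin (m + 1)) :
    (widenedSub Δ[m] (bSub m) {vrt m i}).toSSet ⟶ (wideSub Δ[m] {vrt m i}).toSSet :=
  widenedIncl Δ[m] (bSub m) {vrt m i}

/-- `IsoHorn`: the class of all iso-horn inclusions. -/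
def IsoHorn : MorphismProperty SSet.{0} := fun _ _ h =>
  ∃ (m : ℕ) (i : Fin (m + 1)), Arrow.mk h = Arrow.mk (isoHornIncl m i)

/-! ## The classes `({0} ↪ J) □ Bdry` and `({0} ↪ J) □ Mono` -/

/-- The boundary `∂Δ[n]` as in the older Mathlib (`SSet.boundary`, since replaced by a
subcomplex): the simplices of `Δ[n]` which are not surjective. -/
def boundary (n : ℕ) : SSet.{0} where
  obj m := { α : Δ[n].obj m // ¬Function.Surjective (SSet.stdSimplex.asOrderHom α) }
  map f := TypeCat.ofHom fun α => ⟨Δ[n].map f α.1, by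
      intro h
      apply α.property
      exact Function.Surjective.of_comp h⟩

/-- The boundary inclusion `∂Δ[n] ⟶ Δ[n]` as in the older Mathlib (`SSet.boundaryInclusion`). -/
def boundaryInclusion (n : ℕ) : boundary n ⟶ Δ[n] where
  app m := TypeCat.ofHom fun (α : { α : Δ[n].obj m // _ }) => α.1

/-- The class `({0} ↪ J) □ Bdry` of pushout-products of the vertex `0 : Δ[0] ⟶ J`
with the boundary inclusions `∂Δ[n] ↪ Δ[n]`. -/
def ppJ0Bdry : MorphismProperty SSet.{0} := fun _ _ h =>
  ∃ n : ℕ, Arrow.mk h = Arrow.mk (pp (ptJ false) (boundaryInclusion n))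

/-- The class `({0} ↪ J) □ Mono` of pushout-products of the vertex `0 : Δ[0] ⟶ J`
with all monomorphisms of simplicial sets. -/
def ppJ0Mono : MorphismProperty SSet.{0} := fun _ _ h =>
  ∃ (W Z : SSet.{0}) (g : W ⟶ Z), Mono g ∧ Arrow.mk h = Arrow.mk (pp (ptJ false) g)

/-!
By the adjunction between `- × -` and the internal hom, `X ⟶ Δ[0]` lifts against
`({0} ↪ J) □ i` iff the restriction map from `X^J` to `X` lifts against `i`. Since every
monomorphism is a relative cell complex built from boundary inclusions, lifting against
`({0} ↪ J) □ Bdry` is therefore equivalent to lifting against `({0} ↪ J) □ Mono`.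
An inclusion `A ⊆ Y` widened at all vertices is `({0} × Y) ∪ (J × A) ↪ J × Y`, i.e.
`({0} ↪ J) □ (A ↪ Y)`, and widened at any `ν` it is a retract of that: the retraction of
`J × Y` resets to `0` the `J`-coordinate of each vertex outside `ν`. Conversely,
`({0} ↪ J) □ (∂Δ[n] ↪ Δ[n])` is `∂Δ[n] ↪ Δ[n]` widened at all vertices.
-/

open MonoidalCategory
open SSet (Subcomplex)

section PushoutProduct

variable {A B W Z : SSet.{0}}

/-- The pushout in `pp f g` is taken in the opposite order to Mathlib's `ofHasPushout`. -/
noncomputable def ppPushoutObjObj (f : A ⟶ B) (g : W ⟶ Z) :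
    (curriedTensor SSet.{0}).PushoutObjObj f g where
  pt := pushout (sprodMap (𝟙 A) g) (sprodMap f (𝟙 W))
  inl := pushout.inr _ _
  inr := pushout.inl _ _
  isPushout := (IsPushout.of_hasPushout _ _).flip
  ι := pp f g
  inl_ι := pushout.inr_desc _ _ _
  inr_ι := pushout.inl_desc _ _ _

lemma hasLiftingProperty_pushoutObjObj_ι_iff {f : A ⟶ B} {g : W ⟶ Z}
    (sq : (curriedTensor SSet.{0}).PushoutObjObj f g) {X Y : SSet.{0}} (p : X ⟶ Y) :
    HasLiftingProperty sq.ι p ↔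
      HasLiftingProperty g (Functor.PullbackObjObj.ofHasPullback MonoidalClosed.internalHom f p).π :=
  ParametrizedAdjunction.hasLiftingProperty_iff MonoidalClosed.internalHomAdjunction₂ sq _

lemma hasLiftingProperty_pushoutObjObj_ι_of_pp_boundaryInclusion {f : A ⟶ B} {g : W ⟶ Z}
    [Mono g] {X Y : SSet.{0}} {p : X ⟶ Y}
    (h : ∀ n, HasLiftingProperty (pp f (boundaryInclusion n)) p)
    (sq : (curriedTensor SSet.{0}).PushoutObjObj f g) : HasLiftingProperty sq.ι p := by
  rw [hasLiftingProperty_pushoutObjObj_ι_iff]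
  have hI : SSet.modelCategoryQuillen.I.rlp
      (Functor.PullbackObjObj.ofHasPullback MonoidalClosed.internalHom f p).π := by
    rintro _ _ _ ⟨n⟩
    exact (hasLiftingProperty_pushoutObjObj_ι_iff (ppPushoutObjObj f (boundaryInclusion n)) p).1
      (h n)
  exact (SSet.rlp_monomorphisms ▸ hI) g (.infer_property g)

end PushoutProduct

section Subcomplexes

instance (b : Bool) : Mono (ptJ b) := by
  rw [NatTrans.mono_iff_mono_app]
  exact fun _ => (mono_iff_injective _).2 fun _ _ _ =>
    SSet.stdSimplex.objEquiv.injective (SimplexCategory.isTerminalZero.hom_ext _ _)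

variable {X Y : SSet.{0}}

instance Sub.mono_ι (S : Sub X) : Mono S.ι := by
  rw [NatTrans.mono_iff_mono_app]
  exact fun _ => (mono_iff_injective _).2 Subtype.val_injective

def Sub.toSubcomplex (S : Sub X) : X.Subcomplex where
  obj := S.carrier
  map f _ h := S.map_mem f h

def Sub.isoSubcomplex (S : Sub X) (T : X.Subcomplex) (h : ∀ m, S.carrier m = T.obj m) :
    S.toSSet ≅ T.toSSet :=
  NatIso.ofComponents (fun m => (Equiv.setCongr (h m)).toIso) (fun _ => rfl)

def Sub.homOfMapsTo (φ : X ⟶ Y) {S : Sub X} {T : Sub Y}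
    (h : ∀ m, Set.MapsTo (φ.app m) (S.carrier m) (T.carrier m)) : S.toSSet ⟶ T.toSSet where
  app m := TypeCat.ofHom fun σ => ⟨φ.app m σ.1, h m σ.2⟩
  naturality _ _ f := by
    ext σ
    apply Subtype.ext
    exact NatTrans.naturality_apply φ f σ.1

lemma mem_range_ptJ_iff {m : SimplexCategoryᵒᵖ} (a : J.obj m) (b : Bool) :
    a ∈ (Subcomplex.range (ptJ b)).obj m ↔ ∀ i, a i = b := by
  constructor
  · rintro ⟨x, rfl⟩ i
    rfl
  · intro h
    exact ⟨SSet.stdSimplex.const 0 0 m, funext fun i => (h i).symm⟩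

noncomputable def rangePtJArrowIso (b : Bool) :
    Arrow.mk (Subcomplex.range (ptJ b)).ι ≅ Arrow.mk (ptJ b) :=
  Arrow.isoMk (asIso (Subcomplex.toRange (ptJ b))).symm (Iso.refl _) (by simp)

lemma mem_zeroSlice_iff {m : SimplexCategoryᵒᵖ} (p : (sprod J Y).obj m) :
    p ∈ (zeroSlice Y).carrier m ↔ ∀ i, p.1 i = false :=
  ⟨fun h i => h (SimplexCategory.const ⦋0⦌ m.unop i), fun h g => h (g.toOrderHom 0)⟩

end Subcomplexes

section WidenedAtAllVertices

variable (Y : SSet.{0}) (A : Sub Y)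

lemma widenedSub_univ_carrier (m : SimplexCategoryᵒᵖ) :
    (widenedSub Y A Set.univ).carrier m =
      ((Subcomplex.range (ptJ false)).unionProd A.toSubcomplex).obj m := by
  ext σ
  refine Iff.trans ?_ (Subcomplex.mem_unionProd_iff _ _ σ).symm
  rw [mem_range_ptJ_iff, ← mem_zeroSlice_iff, or_comm]
  exact or_congr Iff.rfl ⟨fun h => h.2, fun h => ⟨fun g _ => ⟨trivial, A.map_mem g.op h⟩, h⟩⟩

noncomputable def widenedInclUnivIso :
    Arrow.mk (widenedIncl Y A Set.univ) ≅
      Arrow.mk (Functor.PushoutObjObj.ofHasPushout (curriedTensor SSet.{0}) (ptJ false) A.ι).ι :=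
  (Arrow.isoMk ((widenedSub Y A Set.univ).isoSubcomplex _ (widenedSub_univ_carrier Y A))
    ((wideSub Y Set.univ).isoSubcomplex ⊤ (fun _ => Set.eq_univ_of_forall fun _ _ _ => trivial) ≪≫
      Subcomplex.topIso _) rfl :
    Arrow.mk (widenedIncl Y A Set.univ) ≅
      Arrow.mk ((Subcomplex.range (ptJ false)).unionProd A.toSubcomplex).ι) ≪≫
  Functor.PushoutObjObj.ι_iso_of_iso_left (f₂ := Arrow.mk A.ι)
    (Subcomplex.unionProd.pushoutObjObj _ A.toSubcomplex)
    (Functor.PushoutObjObj.ofHasPushout _ (ptJ false) A.ι) (rangePtJArrowIso false)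

end WidenedAtAllVertices

section Retraction

variable {Y : SSet.{0}}

def vertex {m : SimplexCategoryᵒᵖ} (y : Y.obj m) (i : Fin (m.unop.len + 1)) : Y.obj V0 :=
  Y.map (SimplexCategory.const ⦋0⦌ m.unop i).op y

lemma vertex_map {m m' : SimplexCategoryᵒᵖ} (f : m ⟶ m') (y : Y.obj m)
    (i : Fin (m'.unop.len + 1)) : vertex (Y.map f y) i = vertex y (f.unop.toOrderHom i) := by
  rw [vertex, vertex, ← Functor.map_comp_apply, ← SimplexCategory.const_comp]
  rfl

lemma mem_wideSub_iff {ν : Set (Y.obj V0)} {m : SimplexCategoryᵒᵖ} (p : (sprod J Y).obj m) :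
    p ∈ (wideSub Y ν).carrier m ↔ ∀ i, p.1 i = true → vertex p.2 i ∈ ν := by
  refine ⟨fun h i => h (SimplexCategory.const ⦋0⦌ m.unop i), fun h g => ?_⟩
  rw [SimplexCategory.eq_const_of_zero g]
  exact h _

open Classical in
noncomputable def wideRetraction (Y : SSet.{0}) (ν : Set (Y.obj V0)) : sprod J Y ⟶ sprod J Y where
  app m := TypeCat.ofHom fun p => (fun i => p.1 i && decide (vertex p.2 i ∈ ν), p.2)
  naturality m m' f := by
    ext p
    refine Prod.ext (funext fun i => ?_) rfl
    show (p.1 _ && decide (vertex (Y.map f p.2) i ∈ ν)) = _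
    rw [vertex_map]
    rfl

variable (ν : Set (Y.obj V0)) {m : SimplexCategoryᵒᵖ}

lemma wideRetraction_app_fst_eq_true_iff (p : (sprod J Y).obj m) (i : Fin (m.unop.len + 1)) :
    ((wideRetraction Y ν).app m p).1 i = true ↔ p.1 i = true ∧ vertex p.2 i ∈ ν := by
  change (_ && _) = true ↔ _
  rw [Bool.and_eq_true, Bool.decide_iff]

lemma wideRetraction_app_mem_wideSub (p : (sprod J Y).obj m) :
    (wideRetraction Y ν).app m p ∈ (wideSub Y ν).carrier m :=
  (mem_wideSub_iff _).2 fun i hi => ((wideRetraction_app_fst_eq_true_iff ν p i).1 hi).2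

lemma wideRetraction_app_of_mem {p : (sprod J Y).obj m} (hp : p ∈ (wideSub Y ν).carrier m) :
    (wideRetraction Y ν).app m p = p := by
  refine Prod.ext (funext fun i => Bool.eq_iff_iff.2 ?_) rfl
  rw [wideRetraction_app_fst_eq_true_iff]
  exact ⟨And.left, fun hi => ⟨hi, (mem_wideSub_iff p).1 hp i hi⟩⟩

lemma wideRetraction_mapsTo_widenedSub (A : Sub Y) :
    Set.MapsTo ((wideRetraction Y ν).app m) ((widenedSub Y A Set.univ).carrier m)
      ((widenedSub Y A ν).carrier m) := by
  rintro p (hp | ⟨-, hpA⟩)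
  · left
    rw [mem_zeroSlice_iff] at hp ⊢
    intro i
    rw [← Bool.not_eq_true, wideRetraction_app_fst_eq_true_iff, hp i]
    simp
  · refine Or.inr ⟨(mem_wideSub_iff _).2 fun i hi => ⟨?_, A.map_mem _ hpA⟩, hpA⟩
    exact (mem_wideSub_iff _).1 (wideRetraction_app_mem_wideSub ν p) i hi

lemma widenedSub_mono (A : Sub Y) {ν' : Set (Y.obj V0)} (h : ν ⊆ ν') :
    (widenedSub Y A ν).Le (widenedSub Y A ν') :=
  fun m _ => Or.imp id fun hp => ⟨wideSub_mono Y (Set.inter_subset_inter_left _ h) m hp.1, hp.2⟩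

noncomputable def widenedInclRetract (A : Sub Y) :
    RetractArrow (widenedIncl Y A ν) (widenedIncl Y A Set.univ) where
  i := Arrow.homMk (Sub.homOfLe (widenedSub_mono ν A (Set.subset_univ ν)))
    (Sub.homOfLe (wideSub_mono Y (Set.subset_univ ν))) rfl
  r := Arrow.homMk
    (Sub.homOfMapsTo (wideRetraction Y ν) fun _ => wideRetraction_mapsTo_widenedSub ν A)
    (Sub.homOfMapsTo (wideRetraction Y ν) fun _ p _ => wideRetraction_app_mem_wideSub ν p) rfl
  retract := by
    ext : 1 <;> ext m σ <;> apply Subtype.ext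
    exacts [wideRetraction_app_of_mem ν (widenedSub_le Y A ν m σ.2),
      wideRetraction_app_of_mem ν σ.2]

end Retraction

/-- A simplicial set `X` has the right lifting property (with respect to
the unique map `X ⟶ Δ[0]`) against every map in `({0} ↪ J) □ Bdry` if and only if it has
the right lifting property against every widened inclusion. -/
theorem rlp_ppJ0Bdry_iff_rlp_Wide (X : SSet.{0}) :
    (∀ ⦃A B : SSet.{0}⦄ (f : A ⟶ B), ppJ0Bdry f → HasLiftingProperty f (toPt X)) ↔
      (∀ ⦃A B : SSet.{0}⦄ (f : A ⟶ B), Wide f → HasLiftingProperty f (toPt X)) := by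
  constructor
  · rintro hpp _ _ f ⟨Y, A, ν, hf⟩
    have hBdry : ∀ n, HasLiftingProperty (pp (ptJ false) (boundaryInclusion n)) (toPt X) :=
      fun n => hpp _ ⟨n, rfl⟩
    have : HasLiftingProperty (widenedIncl Y A Set.univ) (toPt X) :=
      (HasLiftingProperty.iff_of_arrow_iso_left (widenedInclUnivIso Y A) _).2
        (hasLiftingProperty_pushoutObjObj_ι_of_pp_boundaryInclusion hBdry _)
    have := (widenedInclRetract ν A).leftLiftingProperty (toPt X)
    exact HasLiftingProperty.of_arrow_iso_left (eqToIso hf.symm) _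
  · rintro hw _ _ f ⟨n, hf⟩
    have hUniv : HasLiftingProperty (widenedIncl Δ[n] (bSub n) Set.univ) (toPt X) :=
      hw _ ⟨_, _, _, rfl⟩
    rw [HasLiftingProperty.iff_of_arrow_iso_left (widenedInclUnivIso _ _),
      hasLiftingProperty_pushoutObjObj_ι_iff] at hUniv
    have : HasLiftingProperty (pp (ptJ false) (boundaryInclusion n)) (toPt X) :=
      (hasLiftingProperty_pushoutObjObj_ι_iff (ppPushoutObjObj _ _) _).2 hUniv
    exact HasLiftingProperty.of_arrow_iso_left (eqToIso hf.symm) _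

end Paper
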